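/- arXiv:2512.23781 — 4 statements merged into one kernel-verified Lean document; each statement's English description precedes it below -/
import Mathlib

section
/- Let (π_0, …, π_{c−1}) be a price cycle and g : P × P → ℝ any gain function. Suppose t' is an integer with 1 ≤ t' < c such that both t'−1 and c−1 are reset points of the cycle and π_{t'−1} = π_{c−1}. Then the objective value of (π_0, …, π_{c−1}) is at most the maximum of the objective value of the price cycle (π_0, …, π_{t'−1}) (of length t') and the objective value of the price cycle (π_{t'}, …, π_{c−1}) (of length c−t'). -/
/-- Entry of a price cycle at (cyclic) position `t`. -/
noncomputable def cycEntry (L : List ℝ) (t : ℕ) : ℝ := L.getD (t % L.length) 0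

/-- Reference at position `t`: minimum of the `ℓ` cyclically preceding entries. -/
noncomputable def cycRef (ℓ : ℕ) (hℓ : 0 < ℓ) (L : List ℝ) (t : ℕ) : ℝ :=
  (Finset.range ℓ).inf' (Finset.nonempty_range_iff.mpr hℓ.ne') fun j =>
    cycEntry L (t + L.length * ℓ - (j + 1))

/-- Objective value of a price cycle. -/
noncomputable def cycObj (g : ℝ → ℝ → ℝ) (ℓ : ℕ) (hℓ : 0 < ℓ) (L : List ℝ) : ℝ :=
  (∑ t ∈ Finset.range L.length, g (cycRef ℓ hℓ L t) (cycEntry L t)) / L.length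

def RefMonotone (P : Finset ℝ) (g : ℝ → ℝ → ℝ) : Prop :=
  ∀ p ∈ P, ∀ r ∈ P, ∀ r' ∈ P, r ≤ r' → g r p ≤ g r' p

noncomputable def genK (ℓ : ℕ) (R : List ℝ) (t : ℕ) : ℕ :=
  if R.getD ((t + R.length - 1) % R.length) 0 < R.getD t 0 then ℓ else 1

noncomputable def inducedCycle (ℓ : ℕ) (R : List ℝ) : List ℝ :=
  (List.range R.length).flatMap fun t => List.replicate (genK ℓ R t) (R.getD t 0)

def IsResetPoint (ℓ : ℕ) (hℓ : 0 < ℓ) (L : List ℝ) (t : ℕ) : Prop :=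
  cycEntry L t = (Finset.range ℓ).inf' (Finset.nonempty_range_iff.mpr hℓ.ne') fun j =>
    cycEntry L (t + L.length * ℓ - j)

/-!
Let `p` be the common price at the two reset points. At every position of either piece the
reference price is the same in the piece as in the whole cycle: the ℓ preceding prices agree
until the window wraps around, and after wrapping, in the piece as in the cycle, the window
first meets `p` and then only prices `≥ p`. Hence the objective value of the cycle is the
length-weighted average of those of the two pieces, so at most their maximum. The second piece
is treated as the initial segment of the cycle rotated by `t'`.
-/

open Finset

lemma List.drop_eq_take_rotate {α : Type*} {L : List α} {k : ℕ} (hk : k ≤ L.length) :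
    L.drop k = (L.rotate k).take (L.length - k) := by
  rw [List.rotate_eq_drop_append_take hk, List.take_left' List.length_drop]

lemma Finset.inf'_range_le_inf'_of_tail {α : Type*} [SemilatticeInf α] {ℓ t : ℕ}
    (h : (range ℓ).Nonempty) {f f' : ℕ → α} {v : α} (hagree : ∀ j < t, f j = f' j)
    (hft : t < ℓ → f t = v) (hf' : ∀ j, t ≤ j → j < ℓ → v ≤ f' j) :
    (range ℓ).inf' h f ≤ (range ℓ).inf' h f' := by
  refine le_inf' _ _ fun j hj => ?_
  rw [mem_range] at hj
  rcases lt_or_ge j t with hjt | htj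
  · exact (inf'_le f (mem_range.mpr hj)).trans_eq (hagree j hjt)
  · have htℓ : t < ℓ := htj.trans_lt hj
    exact (inf'_le f (mem_range.mpr htℓ)).trans ((hft htℓ).trans_le (hf' j htj hj))

section PriceCycle

variable {ℓ : ℕ} {hℓ : 0 < ℓ}

lemma cycEntry_nil (n : ℕ) : cycEntry [] n = 0 := rfl

lemma cycEntry_add_length_mul (L : List ℝ) (n k : ℕ) :
    cycEntry L (n + L.length * k) = cycEntry L n := by
  rw [cycEntry, cycEntry, Nat.add_mul_mod_self_left]

lemma cycEntry_add_length_mul_sub (L : List ℝ) {n i : ℕ} (k : ℕ) (hi : i ≤ n) :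
    cycEntry L (n + L.length * k - i) = cycEntry L (n - i) := by
  rw [Nat.sub_add_comm hi, cycEntry_add_length_mul]

lemma cycEntry_take {L : List ℝ} {m t : ℕ} (hm : m ≤ L.length) (ht : t < m) :
    cycEntry (L.take m) t = cycEntry L t := by
  rw [cycEntry, cycEntry, List.length_take, min_eq_left hm, Nat.mod_eq_of_lt ht,
    Nat.mod_eq_of_lt (ht.trans_le hm), List.getD_eq_getElem?_getD, List.getD_eq_getElem?_getD,
    List.getElem?_take_of_lt ht]

lemma cycEntry_rotate (L : List ℝ) (k n : ℕ) : cycEntry (L.rotate k) n = cycEntry L (n + k) := by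
  rcases Nat.eq_zero_or_pos L.length with hc | hc
  · rw [List.length_eq_zero_iff.mp hc]
    rfl
  rw [cycEntry, cycEntry, List.length_rotate, List.getD_eq_getElem?_getD,
    List.getD_eq_getElem?_getD, List.getElem?_rotate (Nat.mod_lt _ hc), Nat.mod_add_mod]

/-- The offset `c * ℓ` in window positions only guards against truncated subtraction; once the
window reaches back past position `0` it continues at the end of the cycle. -/
lemma cycEntry_window_of_le {L : List ℝ} (hc : 0 < L.length) {t j : ℕ} (htj : t ≤ j)
    (hj : j < ℓ) : cycEntry L (t + L.length * ℓ - (j + 1)) =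
      cycEntry L (L.length - 1 + L.length * ℓ - (j - t)) := by
  have hℓc : ℓ ≤ L.length * ℓ := Nat.le_mul_of_pos_left ℓ hc
  rw [← cycEntry_add_length_mul L _ 1]
  congr 1
  omega

lemma isResetPoint_iff_le (L : List ℝ) (r : ℕ) :
    IsResetPoint ℓ hℓ L r ↔ ∀ j < ℓ, cycEntry L r ≤ cycEntry L (r + L.length * ℓ - j) := by
  refine ⟨fun h j hj => h ▸ inf'_le _ (mem_range.mpr hj), fun h => le_antisymm ?_ ?_⟩
  · exact le_inf' _ _ fun j hj => h j (mem_range.mp hj)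
  · refine (inf'_le _ (mem_range.mpr hℓ)).trans_eq ?_
    rw [Nat.sub_zero, cycEntry_add_length_mul]

lemma IsResetPoint.le_sub {L : List ℝ} {r : ℕ} (h : IsResetPoint ℓ hℓ L r) {i : ℕ} (hiℓ : i < ℓ)
    (hir : i ≤ r) : cycEntry L r ≤ cycEntry L (r - i) :=
  cycEntry_add_length_mul_sub L ℓ hir ▸ (isResetPoint_iff_le L r).mp h i hiℓ

lemma isResetPoint_length_sub_one_iff {L : List ℝ} (hc : 0 < L.length) :
    IsResetPoint ℓ hℓ L (L.length - 1) ↔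
      ∀ i < ℓ, i < L.length → cycEntry L (L.length - 1) ≤ cycEntry L (L.length - 1 - i) := by
  refine ⟨fun h i hiℓ hic => h.le_sub hiℓ (by omega), fun h => ?_⟩
  rw [isResetPoint_iff_le]
  intro j hj
  set c := L.length
  have hq : j / c ≤ ℓ := (Nat.div_le_self j c).trans hj.le
  have hsplit : c * ℓ = c * (j / c) + c * (ℓ - j / c) := by
    rw [← Nat.mul_add, Nat.add_sub_cancel' hq]
  have hdiv := Nat.div_add_mod j c
  have hmod := Nat.mod_lt j hc
  have hpos : c - 1 + c * ℓ - j = c - 1 - j % c + c * (ℓ - j / c) := by omega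
  rw [hpos, cycEntry_add_length_mul]
  exact h _ ((Nat.mod_le j c).trans_lt hj) hmod

lemma isResetPoint_add_length_mul_iff (L : List ℝ) (r k : ℕ) :
    IsResetPoint ℓ hℓ L (r + L.length * k) ↔ IsResetPoint ℓ hℓ L r := by
  rcases Nat.eq_zero_or_pos L.length with hc | hc
  · rw [hc, zero_mul, add_zero]
  have hℓc : ℓ ≤ L.length * ℓ := Nat.le_mul_of_pos_left ℓ hc
  simp only [isResetPoint_iff_le, cycEntry_add_length_mul]
  refine forall₂_congr fun j hj => ?_
  rw [show r + L.length * k + L.length * ℓ - j = r + L.length * ℓ - j + L.length * k by omega,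
    cycEntry_add_length_mul]

lemma isResetPoint_rotate_iff (L : List ℝ) (k r : ℕ) :
    IsResetPoint ℓ hℓ (L.rotate k) r ↔ IsResetPoint ℓ hℓ L (r + k) := by
  rcases Nat.eq_zero_or_pos L.length with hc | hc
  · rw [List.length_eq_zero_iff.mp hc]
    simp only [isResetPoint_iff_le, List.rotate_nil, cycEntry_nil, le_refl, implies_true]
  have hℓc : ℓ ≤ L.length * ℓ := Nat.le_mul_of_pos_left ℓ hc
  simp only [isResetPoint_iff_le, cycEntry_rotate, List.length_rotate]
  refine forall₂_congr fun j hj => ?_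
  rw [show r + L.length * ℓ - j + k = r + k + L.length * ℓ - j by omega]

lemma cycRef_rotate (L : List ℝ) (k t : ℕ) :
    cycRef ℓ hℓ (L.rotate k) t = cycRef ℓ hℓ L (t + k) := by
  rcases Nat.eq_zero_or_pos L.length with hc | hc
  · rw [List.length_eq_zero_iff.mp hc]
    rfl
  have hℓc : ℓ ≤ L.length * ℓ := Nat.le_mul_of_pos_left ℓ hc
  refine inf'_congr _ rfl fun j hj => ?_
  have hjℓ := mem_range.mp hj
  rw [List.length_rotate, cycEntry_rotate]
  congr 1
  omega

/-- The part of the window that reaches back past position `0` starts with the common last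
price and otherwise holds prices no smaller, by the reset property. -/
lemma cycRef_eq_of_isResetPoint_length_sub_one {L M : List ℝ} {t : ℕ}
    (hL : IsResetPoint ℓ hℓ L (L.length - 1)) (hM : IsResetPoint ℓ hℓ M (M.length - 1))
    (hlast : cycEntry L (L.length - 1) = cycEntry M (M.length - 1))
    (htL : t < L.length) (htM : t < M.length) (hagree : ∀ i < t, cycEntry L i = cycEntry M i) :
    cycRef ℓ hℓ L t = cycRef ℓ hℓ M t := by
  have window_of_lt (N : List ℝ) {j : ℕ} (hj : j < t) :
      cycEntry N (t + N.length * ℓ - (j + 1)) = cycEntry N (t - 1 - j) := by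
    rw [cycEntry_add_length_mul_sub N ℓ (by omega : j + 1 ≤ t)]
    congr 1
    omega
  have last_le_window {N : List ℝ} (hN : IsResetPoint ℓ hℓ N (N.length - 1)) (htN : t < N.length)
      (j : ℕ) (htj : t ≤ j) (hj : j < ℓ) :
      cycEntry N (N.length - 1) ≤ cycEntry N (t + N.length * ℓ - (j + 1)) := by
    rw [cycEntry_window_of_le (by omega) htj hj]
    exact (isResetPoint_iff_le N _).mp hN _ (by omega)
  have window_self (N : List ℝ) (htN : t < N.length) (htℓ : t < ℓ) :
      cycEntry N (t + N.length * ℓ - (t + 1)) = cycEntry N (N.length - 1) := by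
    rw [cycEntry_window_of_le (by omega) le_rfl htℓ, Nat.sub_self, Nat.sub_zero,
      cycEntry_add_length_mul]
  have hagree' : ∀ j < t, cycEntry L (t + L.length * ℓ - (j + 1)) =
      cycEntry M (t + M.length * ℓ - (j + 1)) := fun j hj => by
    rw [window_of_lt L hj, window_of_lt M hj, hagree _ (by omega)]
  apply le_antisymm
  · exact inf'_range_le_inf'_of_tail _ hagree' (window_self L htL) fun j htj hj =>
      hlast ▸ last_le_window hM htM j htj hj
  · exact inf'_range_le_inf'_of_tail _ (fun j hj => (hagree' j hj).symm) (window_self M htM)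
      fun j htj hj => hlast ▸ last_le_window hL htL j htj hj

lemma cycRef_take {L : List ℝ} {m t : ℕ} (hm : 0 < m) (hmL : m ≤ L.length)
    (hL : IsResetPoint ℓ hℓ L (L.length - 1)) (hLm : IsResetPoint ℓ hℓ L (m - 1))
    (heq : cycEntry L (m - 1) = cycEntry L (L.length - 1)) (ht : t < m) :
    cycRef ℓ hℓ (L.take m) t = cycRef ℓ hℓ L t := by
  have hlen : (L.take m).length = m := by rw [List.length_take, min_eq_left hmL]
  have hlast : cycEntry (L.take m) (m - 1) = cycEntry L (m - 1) := cycEntry_take hmL (by omega)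
  have hreset : IsResetPoint ℓ hℓ (L.take m) ((L.take m).length - 1) := by
    rw [isResetPoint_length_sub_one_iff (by omega), hlen]
    intro i hiℓ him
    rw [hlast, cycEntry_take hmL (by omega)]
    exact hLm.le_sub hiℓ (by omega)
  refine cycRef_eq_of_isResetPoint_length_sub_one hreset hL ?_ (by omega) (by omega)
    fun i hi => cycEntry_take hmL (hi.trans ht)
  rw [hlen, hlast, heq]

lemma length_mul_cycObj (g : ℝ → ℝ → ℝ) {L : List ℝ} (hL : 0 < L.length) :
    (L.length : ℝ) * cycObj g ℓ hℓ L =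
      ∑ t ∈ range L.length, g (cycRef ℓ hℓ L t) (cycEntry L t) :=
  mul_div_cancel₀ _ (by positivity)

lemma mul_cycObj_take (g : ℝ → ℝ → ℝ) {L : List ℝ} {m : ℕ} (hm : 0 < m) (hmL : m ≤ L.length)
    (hL : IsResetPoint ℓ hℓ L (L.length - 1)) (hLm : IsResetPoint ℓ hℓ L (m - 1))
    (heq : cycEntry L (m - 1) = cycEntry L (L.length - 1)) :
    (m : ℝ) * cycObj g ℓ hℓ (L.take m) = ∑ t ∈ range m, g (cycRef ℓ hℓ L t) (cycEntry L t) := by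
  have hlen : (L.take m).length = m := by rw [List.length_take, min_eq_left hmL]
  have h := length_mul_cycObj g (hℓ := hℓ) (L := L.take m) (by omega)
  rw [hlen] at h
  rw [h]
  refine sum_congr rfl fun t ht => ?_
  rw [cycRef_take hm hmL hL hLm heq (mem_range.mp ht), cycEntry_take hmL (mem_range.mp ht)]

end PriceCycle

lemma le_max_of_add_mul_eq {a b s x y : ℝ} (ha : 0 < a) (hb : 0 < b)
    (hs : (a + b) * s = a * x + b * y) : s ≤ max x y := by
  have : (a + b) * s ≤ (a + b) * max x y := by
    rw [hs, add_mul]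
    gcongr
    exacts [le_max_left x y, le_max_right x y]
  exact le_of_mul_le_mul_left this (by positivity)

theorem stmt2_general (ℓ : ℕ) (hℓ : 0 < ℓ)
    (g : ℝ → ℝ → ℝ)
    (L : List ℝ)
    (t' : ℕ) (ht'1 : 1 ≤ t') (ht'c : t' < L.length)
    (hreset1 : IsResetPoint ℓ hℓ L (t' - 1))
    (hreset2 : IsResetPoint ℓ hℓ L (L.length - 1))
    (heq : cycEntry L (t' - 1) = cycEntry L (L.length - 1)) :
    cycObj g ℓ hℓ L ≤ max (cycObj g ℓ hℓ (L.take t')) (cycObj g ℓ hℓ (L.drop t')) := by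
  set c := L.length
  set R := L.rotate t'
  have hRc : R.length = c := List.length_rotate L t'
  have hR_last : IsResetPoint ℓ hℓ R (R.length - 1) := by
    rw [isResetPoint_rotate_iff, hRc, show c - 1 + t' = t' - 1 + c * 1 by omega,
      isResetPoint_add_length_mul_iff]
    exact hreset1
  have hR_mid : IsResetPoint ℓ hℓ R (c - t' - 1) := by
    rwa [isResetPoint_rotate_iff, show c - t' - 1 + t' = c - 1 by omega]
  have hR_eq : cycEntry R (c - t' - 1) = cycEntry R (R.length - 1) := by
    rw [cycEntry_rotate, cycEntry_rotate, hRc, show c - t' - 1 + t' = c - 1 by omega,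
      show c - 1 + t' = t' - 1 + c * 1 by omega, cycEntry_add_length_mul, heq]
  have hobj_take := mul_cycObj_take g ht'1 ht'c.le hreset2 hreset1 heq
  have hobj_drop := mul_cycObj_take g (by omega) (by omega) hR_last hR_mid hR_eq
  rw [← List.drop_eq_take_rotate ht'c.le] at hobj_drop
  refine le_max_of_add_mul_eq (a := t') (b := (c - t' : ℕ)) (by positivity)
    (Nat.cast_pos.mpr (by omega)) ?_
  rw [← Nat.cast_add, Nat.add_sub_cancel' ht'c.le, length_mul_cycObj g (by omega), hobj_take,
    hobj_drop, ← sum_range_add_sum_Ico _ ht'c.le, sum_Ico_eq_sum_range]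
  simp only [R, cycRef_rotate, cycEntry_rotate, add_comm]

/-- if `t'−1` and `c−1` are reset points carrying the same price,
then the objective value of the whole cycle is at most the max of the objective
values of the two sub-cycles obtained by splitting at these reset points. -/
theorem stmt2 (P : Finset ℝ) (hP : P.Nonempty) (ℓ : ℕ) (hℓ : 0 < ℓ)
    (g : ℝ → ℝ → ℝ)
    (L : List ℝ) (hLP : ∀ x ∈ L, x ∈ P)
    (t' : ℕ) (ht'1 : 1 ≤ t') (ht'c : t' < L.length)
    (hreset1 : IsResetPoint ℓ hℓ L (t' - 1))
    (hreset2 : IsResetPoint ℓ hℓ L (L.length - 1))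
    (heq : cycEntry L (t' - 1) = cycEntry L (L.length - 1)) :
    cycObj g ℓ hℓ L ≤ max (cycObj g ℓ hℓ (L.take t')) (cycObj g ℓ hℓ (L.drop t')) :=
  stmt2_general ℓ hℓ g L t' ht'1 ht'c hreset1 hreset2 heq
end

section
/- Let V ⊂ [0, 1) be a nonempty finite set of discount values, let n ≥ 1, and for each i = 1, …, n let q_i : V → ℝ be weakly increasing with q_i(v) > 0 for all v ∈ V. For each λ ≥ 0 with λ·v < 1 for every v ∈ V, let v_i(λ) denote the largest element of argmax_{v ∈ V} (1 − λv)·q_i(v). Then for any 0 ≤ λ ≤ λ' with λ'·v < 1 for all v ∈ V: (i) v_i(λ') ≤ v_i(λ) for every i, and (ii) for any constant W > 0, the total expected discount redeemed Σ_{i=1}^n v_i(λ)·W·q_i(v_i(λ)) is weakly decreasing in λ, i.e., Σ_{i=1}^n v_i(λ')·W·q_i(v_i(λ')) ≤ Σ_{i=1}^n v_i(λ)·W·q_i(v_i(λ)). -/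
/-- the largest maximizer of the penalized expected revenue
`(1 − λv)·q_i(v)` is weakly decreasing in the penalty `λ` for each customer,
and so is the total expected discount redeemed. -/
theorem stmt4 (V : Finset ℝ) (hV : V.Nonempty) (hV01 : ∀ v ∈ V, 0 ≤ v ∧ v < 1)
    (n : ℕ) (hn : 1 ≤ n) (q : Fin n → ℝ → ℝ)
    (hq_mono : ∀ i : Fin n, ∀ v ∈ V, ∀ w ∈ V, v ≤ w → q i v ≤ q i w)
    (hq_pos : ∀ i : Fin n, ∀ v ∈ V, 0 < q i v)
    (lam lam' : ℝ) (hlam0 : 0 ≤ lam) (hle : lam ≤ lam')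
    (hlam' : ∀ v ∈ V, lam' * v < 1)
    (vsel vsel' : Fin n → ℝ)
    -- `vsel i` is the largest element of `argmax_{v ∈ V} (1 − lam·v)·q_i(v)`:
    (hsel_mem : ∀ i, vsel i ∈ V)
    (hsel_max : ∀ i, ∀ w ∈ V, (1 - lam * w) * q i w ≤ (1 - lam * vsel i) * q i (vsel i))
    (hsel_top : ∀ i, ∀ w ∈ V,
      (∀ u ∈ V, (1 - lam * u) * q i u ≤ (1 - lam * w) * q i w) → w ≤ vsel i)
    -- `vsel' i` is the largest element of `argmax_{v ∈ V} (1 − lam'·v)·q_i(v)`: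
    (hsel'_mem : ∀ i, vsel' i ∈ V)
    (hsel'_max : ∀ i, ∀ w ∈ V, (1 - lam' * w) * q i w ≤ (1 - lam' * vsel' i) * q i (vsel' i))
    (hsel'_top : ∀ i, ∀ w ∈ V,
      (∀ u ∈ V, (1 - lam' * u) * q i u ≤ (1 - lam' * w) * q i w) → w ≤ vsel' i)
    (W : ℝ) (hW : 0 < W) :
    (∀ i, vsel' i ≤ vsel i) ∧
    ∑ i, vsel' i * W * q i (vsel' i) ≤ ∑ i, vsel i * W * q i (vsel i) := by
  have key : ∀ i, vsel' i ≤ vsel i := by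
    intro i
    by_contra hc
    push_neg at hc
    have ha := hsel_mem i
    have hb := hsel'_mem i
    have hqab : q i (vsel i) ≤ q i (vsel' i) := hq_mono i _ ha _ hb hc.le
    have hqb : 0 < q i (vsel' i) := hq_pos i _ hb
    have hqa : 0 < q i (vsel i) := hq_pos i _ ha
    have ha0 : 0 ≤ vsel i := (hV01 _ ha).1
    have h1 : (1 - lam * vsel' i) * q i (vsel' i)
        < (1 - lam * vsel i) * q i (vsel i) := by
      rcases lt_or_eq_of_le (hsel_max i _ hb) with h' | h'
      · exact h'
      · exfalso
        have hle' : vsel' i ≤ vsel i :=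
          hsel_top i _ hb (fun u hu => h' ▸ hsel_max i u hu)
        linarith
    have h2 : (1 - lam' * vsel i) * q i (vsel i)
        ≤ (1 - lam' * vsel' i) * q i (vsel' i) := hsel'_max i _ ha
    have hab : vsel i * q i (vsel i) < vsel' i * q i (vsel' i) := by nlinarith
    nlinarith
  refine ⟨key, Finset.sum_le_sum fun i _ => ?_⟩
  have hterm : vsel' i * q i (vsel' i) ≤ vsel i * q i (vsel i) := by
    have ha := hsel_mem i
    have hb := hsel'_mem i
    have hqab : q i (vsel' i) ≤ q i (vsel i) := hq_mono i _ hb _ ha (key i)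
    rcases eq_or_lt_of_le (le_trans hlam0 hle) with h0 | h0
    · -- lam' = 0, hence lam = 0 and the selections coincide
      have hl : lam = 0 := le_antisymm (h0 ▸ hle) hlam0
      have hge : vsel i ≤ vsel' i := by
        apply hsel'_top i _ ha
        intro u hu
        have := hsel_max i u hu
        rw [hl] at this
        rw [← h0]
        simpa using this
      have : vsel i = vsel' i := le_antisymm hge (key i)
      rw [this]
    · -- lam' > 0
      have h2 : (1 - lam' * vsel i) * q i (vsel i)
          ≤ (1 - lam' * vsel' i) * q i (vsel' i) := hsel'_max i _ ha
      nlinarith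
  calc vsel' i * W * q i (vsel' i) = W * (vsel' i * q i (vsel' i)) := by ring
    _ ≤ W * (vsel i * q i (vsel i)) := by
        exact mul_le_mul_of_nonneg_left hterm hW.le
    _ = vsel i * W * q i (vsel i) := by ring
end

section
/- Let (ρ_0, …, ρ_{d−1}) be a generator cycle of pairwise distinct elements of P, with k_t = ℓ if ρ_t > ρ_{(t−1) mod d} and k_t = 1 otherwise, and let π be the induced ℓ-up-1-down price cycle of length c = Σ_{t=0}^{d−1} k_t. Then at every position of π lying in the block of k_t consecutive copies of ρ_t, the minimum of the ℓ cyclically preceding entries of π equals ρ_{(t−1) mod d}. Consequently, for every gain function g : P × P → ℝ, the objective value of π equals (Σ_{t=0}^{d−1} k_t · g(ρ_{(t−1) mod d}, ρ_t)) / (Σ_{t=0}^{d−1} k_t). -/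
/-!
Write `ρ n` for the generator entry `ρ_{n mod d}` and call the `k_n` copies of `ρ n` block `n`.
Reading the induced cycle backwards from the last entry of block `n`, which is `ρ n`, the values
never drop below `ρ n`: a block of length `1 < ℓ` is a down-step, so the block before it has a
value at least as large, while a block of length `ℓ` fills the rest of any window of `ℓ`
entries. A position inside block `n + 1` is preceded by earlier copies of `ρ (n + 1)`, which
exist only when block `n + 1` is an up-step and so exceed `ρ n`, and then by this backward
reading of block `n`; hence its reference is `ρ n`. The objective value is then a sum of
constant blocks.
-/
open Finset

theorem List.length_flatMap_range {α : Type*} (F : ℕ → List α) (n : ℕ) :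
    ((List.range n).flatMap F).length = ∑ s ∈ Finset.range n, (F s).length := by
  induction n with
  | zero => rfl
  | succ n ih =>
    rw [List.range_succ, List.flatMap_append, List.length_append, ih, Finset.sum_range_succ]
    simp

theorem List.getD_flatMap_range {α : Type*} (F : ℕ → List α) (d : α) {n t i : ℕ} (ht : t < n)
    (hi : i < (F t).length) :
    ((List.range n).flatMap F).getD (∑ s ∈ Finset.range t, (F s).length + i) d = (F t).getD i d := by
  induction n with
  | zero => omega
  | succ n ih =>
    rw [List.range_succ, List.flatMap_append]
    rcases (Nat.lt_succ_iff.mp ht).lt_or_eq with ht | rfl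
    · have : ∑ s ∈ Finset.range (t + 1), (F s).length ≤ ∑ s ∈ Finset.range n, (F s).length :=
        Finset.sum_le_sum_of_subset (Finset.range_subset_range.mpr ht)
      rw [Finset.sum_range_succ] at this
      rw [List.getD_append _ _ _ _ (by rw [List.length_flatMap_range]; omega), ih ht]
    · rw [List.getD_append_right _ _ _ _ (by rw [List.length_flatMap_range]; omega),
        List.length_flatMap_range, Nat.add_sub_cancel_left, List.flatMap_singleton]

theorem Finset.sum_range_sum_eq_sum_sum {M : Type*} [AddCommMonoid M] (k : ℕ → ℕ) (f : ℕ → M)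
    (n : ℕ) :
    ∑ x ∈ range (∑ s ∈ range n, k s), f x =
      ∑ t ∈ range n, ∑ i ∈ range (k t), f (∑ s ∈ range t, k s + i) := by
  induction n with
  | zero => simp
  | succ n ih => rw [sum_range_succ, sum_range_add, ih, sum_range_succ]

section CyclicList

variable (L : List ℝ)

theorem cycEntry_add_mul_length (x m : ℕ) : cycEntry L (x + L.length * m) = cycEntry L x := by
  simp [cycEntry]

theorem cycRef_add_mul_length {ℓ : ℕ} (hℓ : 0 < ℓ) (x m : ℕ) :
    cycRef ℓ hℓ L (x + L.length * m) = cycRef ℓ hℓ L x := by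
  rcases L.length.eq_zero_or_pos with h | h
  · simp [h]
  have : ℓ ≤ L.length * ℓ := Nat.le_mul_of_pos_left ℓ h
  refine inf'_congr _ rfl fun j hj => ?_
  have : j < ℓ := mem_range.mp hj
  rw [show x + L.length * m + L.length * ℓ - (j + 1) = x + L.length * ℓ - (j + 1) + L.length * m
    by omega, cycEntry_add_mul_length]

theorem cycRef_eq_inf'_of_le {ℓ : ℕ} (hℓ : 0 < ℓ) {x : ℕ} (hx : ℓ ≤ x) :
    cycRef ℓ hℓ L x = (range ℓ).inf' (nonempty_range_iff.mpr hℓ.ne')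
      fun j => cycEntry L (x - (j + 1)) := by
  refine inf'_congr _ rfl fun j hj => ?_
  have : j < ℓ := mem_range.mp hj
  rw [show x + L.length * ℓ - (j + 1) = x - (j + 1) + L.length * ℓ by omega, cycEntry_add_mul_length]

end CyclicList

/-- `k_{n mod d}`. Together with `cycEntry R n = ρ_{n mod d}` this lays the induced cycle out
periodically: block `n` occupies positions `blockStart ℓ R n + i` for `i < blockLen ℓ R n`. -/
noncomputable def blockLen (ℓ : ℕ) (R : List ℝ) (n : ℕ) : ℕ := genK ℓ R (n % R.length)

noncomputable def blockStart (ℓ : ℕ) (R : List ℝ) (n : ℕ) : ℕ := ∑ s ∈ range n, blockLen ℓ R s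

section InducedCycle

variable {ℓ : ℕ} {R : List ℝ}

theorem blockLen_pos (hℓ : 0 < ℓ) (n : ℕ) : 0 < blockLen ℓ R n := by
  unfold blockLen genK; split_ifs <;> omega

theorem blockLen_le (hℓ : 0 < ℓ) (n : ℕ) : blockLen ℓ R n ≤ ℓ := by
  unfold blockLen genK; split_ifs <;> omega

theorem blockLen_succ (hR : R ≠ []) (n : ℕ) :
    blockLen ℓ R (n + 1) = if cycEntry R n < cycEntry R (n + 1) then ℓ else 1 := by
  have hd : 0 < R.length := List.length_pos_iff.mpr hR
  have hpred : ((n + 1) % R.length + R.length - 1) % R.length = n % R.length := by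
    rw [Nat.add_sub_assoc hd, Nat.mod_add_mod, show n + 1 + (R.length - 1) = n + R.length by omega,
      Nat.add_mod_right]
  rw [blockLen, genK, hpred, cycEntry, cycEntry]

theorem blockLen_mul_length_add (m n : ℕ) : blockLen ℓ R (R.length * m + n) = blockLen ℓ R n := by
  simp [blockLen]

theorem blockStart_succ (n : ℕ) : blockStart ℓ R (n + 1) = blockStart ℓ R n + blockLen ℓ R n :=
  sum_range_succ _ _

theorem blockStart_mono {m n : ℕ} (h : m ≤ n) : blockStart ℓ R m ≤ blockStart ℓ R n :=
  sum_le_sum_of_subset (range_subset_range.mpr h)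

theorem blockStart_mul_length_add (m n : ℕ) :
    blockStart ℓ R (R.length * m + n) = blockStart ℓ R (R.length * m) + blockStart ℓ R n := by
  simp only [blockStart, sum_range_add, blockLen_mul_length_add]

theorem blockStart_mul_length (m : ℕ) :
    blockStart ℓ R (R.length * m) = blockStart ℓ R R.length * m := by
  induction m with
  | zero => simp [blockStart]
  | succ m ih => rw [Nat.mul_succ, blockStart_mul_length_add, ih, Nat.mul_succ]

theorem blockStart_eq_sum_genK {n : ℕ} (hn : n ≤ R.length) :
    blockStart ℓ R n = ∑ s ∈ range n, genK ℓ R s :=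
  sum_congr rfl fun s hs => by
    rw [blockLen, Nat.mod_eq_of_lt (lt_of_lt_of_le (mem_range.mp hs) hn)]

theorem length_inducedCycle : (inducedCycle ℓ R).length = blockStart ℓ R R.length := by
  rw [inducedCycle, List.length_flatMap_range, blockStart_eq_sum_genK le_rfl]
  simp only [List.length_replicate]

theorem cycEntry_inducedCycle (hR : R ≠ []) {n i : ℕ} (hi : i < blockLen ℓ R n) :
    cycEntry (inducedCycle ℓ R) (blockStart ℓ R n + i) = cycEntry R n := by
  have hr : n % R.length < R.length := Nat.mod_lt n (List.length_pos_iff.mpr hR)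
  have hk : blockLen ℓ R n = genK ℓ R (n % R.length) := rfl
  have hn : blockStart ℓ R n + i
      = blockStart ℓ R (n % R.length) + i + (inducedCycle ℓ R).length * (n / R.length) := by
    conv_lhs => rw [← Nat.div_add_mod n R.length]
    rw [blockStart_mul_length_add, blockStart_mul_length, length_inducedCycle]
    ring
  have hlt : blockStart ℓ R (n % R.length) + i < (inducedCycle ℓ R).length := by
    have := blockStart_mono (ℓ := ℓ) (R := R) (Nat.succ_le_of_lt hr)
    rw [blockStart_succ, blockLen, Nat.mod_mod, ← hk] at this
    rw [length_inducedCycle]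
    omega
  rw [hn, cycEntry_add_mul_length, cycEntry, Nat.mod_eq_of_lt hlt, inducedCycle,
    blockStart_eq_sum_genK hr.le]
  have := List.getD_flatMap_range (fun t => List.replicate (genK ℓ R t) (R.getD t 0)) 0 hr
    (i := i) (by simpa [← hk] using hi)
  simp only [List.length_replicate] at this
  rw [this, List.getD_replicate _ (hk ▸ hi), cycEntry]

theorem cycEntry_inducedCycle_blockStart_succ_sub (hR : R ≠ []) {n m : ℕ}
    (hm : m < blockLen ℓ R n) :
    cycEntry (inducedCycle ℓ R) (blockStart ℓ R (n + 1) - 1 - m) = cycEntry R n := by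
  rw [blockStart_succ, show blockStart ℓ R n + blockLen ℓ R n - 1 - m
    = blockStart ℓ R n + (blockLen ℓ R n - 1 - m) by omega, cycEntry_inducedCycle hR (by omega)]

theorem cycEntry_le_cycEntry_inducedCycle (hR : R ≠ []) (n : ℕ) {m : ℕ} (hmℓ : m < ℓ)
    (hm : m < blockStart ℓ R (n + 1)) :
    cycEntry R n ≤ cycEntry (inducedCycle ℓ R) (blockStart ℓ R (n + 1) - 1 - m) := by
  induction n generalizing m with
  | zero =>
    rw [blockStart_succ, blockStart, sum_range_zero, zero_add] at hm
    exact (cycEntry_inducedCycle_blockStart_succ_sub hR hm).ge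
  | succ n ih =>
    by_cases hmk : m < blockLen ℓ R (n + 1)
    · exact (cycEntry_inducedCycle_blockStart_succ_sub hR hmk).ge
    have hstep := blockLen_succ (ℓ := ℓ) hR n
    split_ifs at hstep with hup
    · omega
    have hsucc := blockStart_succ (ℓ := ℓ) (R := R) (n + 1)
    calc cycEntry R (n + 1) ≤ cycEntry R n := not_lt.mp hup
      _ ≤ cycEntry (inducedCycle ℓ R) (blockStart ℓ R (n + 1) - 1 - (m - 1)) :=
        ih (by omega) (by omega)
      _ = cycEntry (inducedCycle ℓ R) (blockStart ℓ R (n + 1 + 1) - 1 - m) := by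
        congr 1; omega

theorem cycRef_inducedCycle_of_le (hℓ : 0 < ℓ) (hR : R ≠ []) {n i : ℕ}
    (hi : i < blockLen ℓ R (n + 1)) (hℓi : ℓ ≤ blockStart ℓ R (n + 1) + i) :
    cycRef ℓ hℓ (inducedCycle ℓ R) (blockStart ℓ R (n + 1) + i) = cycEntry R n := by
  rw [cycRef_eq_inf'_of_le _ hℓ hℓi]
  apply le_antisymm
  · refine (inf'_le _ (mem_range.mpr (hi.trans_le (blockLen_le hℓ _)))).trans_eq ?_
    rw [← cycEntry_inducedCycle_blockStart_succ_sub hR (blockLen_pos hℓ n)]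
    congr 1
    omega
  refine le_inf' _ _ fun j hj => ?_
  have hjℓ := mem_range.mp hj
  rcases lt_or_ge j i with hji | hij
  · have hup : cycEntry R n < cycEntry R (n + 1) := by
      have hstep := blockLen_succ (ℓ := ℓ) hR n
      split_ifs at hstep with h
      · exact h
      · omega
    rw [show blockStart ℓ R (n + 1) + i - (j + 1) = blockStart ℓ R (n + 1) + (i - 1 - j) by omega,
      cycEntry_inducedCycle hR (by omega)]
    exact hup.le
  · rw [show blockStart ℓ R (n + 1) + i - (j + 1) = blockStart ℓ R (n + 1) - 1 - (j - i) by omega]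
    exact cycEntry_le_cycEntry_inducedCycle hR n (by omega) (by omega)

theorem cycRef_inducedCycle (hℓ : 0 < ℓ) (hR : R ≠ []) {n i : ℕ} (hi : i < blockLen ℓ R n) :
    cycRef ℓ hℓ (inducedCycle ℓ R) (blockStart ℓ R n + i) = cycEntry R (n + R.length - 1) := by
  have hd : 0 < R.length := List.length_pos_iff.mpr hR
  have hc : 0 < (inducedCycle ℓ R).length :=
    length_inducedCycle (ℓ := ℓ) ▸ (blockLen_pos hℓ 0).trans_le (blockStart_mono hd)
  -- Shifting by `ℓ` periods makes the position at least `ℓ`, so the window does not wrap around.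
  obtain ⟨N, hN⟩ : ∃ N, R.length * ℓ + n = N + 1 := ⟨R.length * ℓ + n - 1, by
    have := Nat.le_mul_of_pos_left ℓ hd; omega⟩
  have hB : blockStart ℓ R n + i + (inducedCycle ℓ R).length * ℓ = blockStart ℓ R (N + 1) + i := by
    rw [← hN, blockStart_mul_length_add, blockStart_mul_length, length_inducedCycle]
    ring
  rw [← cycRef_add_mul_length _ hℓ _ ℓ, hB, cycRef_inducedCycle_of_le hℓ hR ?_ ?_]
  · have := Nat.le_mul_of_pos_right R.length hℓ
    rw [show N = n + R.length - 1 + R.length * (ℓ - 1) by rw [Nat.mul_sub_one]; omega,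
      cycEntry_add_mul_length]
  · rwa [← hN, blockLen_mul_length_add]
  · have := Nat.le_mul_of_pos_left ℓ hc
    omega

theorem cycObj_inducedCycle (hℓ : 0 < ℓ) (g : ℝ → ℝ → ℝ) :
    cycObj g ℓ hℓ (inducedCycle ℓ R) =
      (∑ t ∈ range R.length,
          (blockLen ℓ R t : ℝ) * g (cycEntry R (t + R.length - 1)) (cycEntry R t)) /
        blockStart ℓ R R.length := by
  rcases eq_or_ne R [] with rfl | hR
  · simp [cycObj, inducedCycle, blockStart]
  rw [cycObj, length_inducedCycle, blockStart, sum_range_sum_eq_sum_sum]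
  simp only [← blockStart.eq_1]
  congr 1
  refine sum_congr rfl fun t _ => ?_
  rw [sum_congr rfl fun i hi => by
    rw [cycRef_inducedCycle hℓ hR (mem_range.mp hi), cycEntry_inducedCycle hR (mem_range.mp hi)]]
  rw [sum_const, card_range, nsmul_eq_mul]

end InducedCycle

theorem stmt6_general (ℓ : ℕ) (hℓ : 0 < ℓ)
    (R : List ℝ) :
    (∀ t < R.length, ∀ pos : ℕ,
      (∑ s ∈ Finset.range t, genK ℓ R s) ≤ pos →
      pos < ∑ s ∈ Finset.range (t + 1), genK ℓ R s →
      cycRef ℓ hℓ (inducedCycle ℓ R) pos =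
        R.getD ((t + R.length - 1) % R.length) 0) ∧
    ∀ g : ℝ → ℝ → ℝ,
      cycObj g ℓ hℓ (inducedCycle ℓ R) =
        (∑ t ∈ Finset.range R.length,
            (genK ℓ R t : ℝ) *
              g (R.getD ((t + R.length - 1) % R.length) 0) (R.getD t 0)) /
          (∑ t ∈ Finset.range R.length, (genK ℓ R t : ℝ)) := by
  refine ⟨fun t ht pos hlo hhi => ?_, fun g => ?_⟩
  · rw [← blockStart_eq_sum_genK ht.le] at hlo
    rw [← blockStart_eq_sum_genK ht, blockStart_succ] at hhi
    obtain ⟨i, rfl⟩ := Nat.exists_eq_add_of_le hlo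
    exact cycRef_inducedCycle hℓ (List.ne_nil_of_length_pos (by omega)) (by omega)
  · rw [cycObj_inducedCycle, blockStart_eq_sum_genK le_rfl, Nat.cast_sum]
    congr 1
    refine sum_congr rfl fun t ht => ?_
    rw [blockLen, Nat.mod_eq_of_lt (mem_range.mp ht)]
    simp only [cycEntry, Nat.mod_eq_of_lt (mem_range.mp ht)]

/-- along the ℓ-up-1-down price cycle induced by a generator cycle
of distinct prices, the reference at every position of the `t`-th block equals
`ρ_{(t−1) mod d}`; consequently the objective value is the `k`-weighted average
of `g(ρ_{(t−1) mod d}, ρ_t)`. -/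
theorem stmt6 (P : Finset ℝ) (hP : P.Nonempty) (ℓ : ℕ) (hℓ : 0 < ℓ)
    (R : List ℝ) (hR : R ≠ []) (hnd : R.Nodup) (hRP : ∀ x ∈ R, x ∈ P) :
    (∀ t < R.length, ∀ pos : ℕ,
      (∑ s ∈ Finset.range t, genK ℓ R s) ≤ pos →
      pos < ∑ s ∈ Finset.range (t + 1), genK ℓ R s →
      cycRef ℓ hℓ (inducedCycle ℓ R) pos =
        R.getD ((t + R.length - 1) % R.length) 0) ∧
    ∀ g : ℝ → ℝ → ℝ,
      cycObj g ℓ hℓ (inducedCycle ℓ R) =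
        (∑ t ∈ Finset.range R.length,
            (genK ℓ R t : ℝ) *
              g (R.getD ((t + R.length - 1) % R.length) 0) (R.getD t 0)) /
          (∑ t ∈ Finset.range R.length, (genK ℓ R t : ℝ)) :=
  stmt6_general ℓ hℓ R
end

section
/- Let ρ_0, …, ρ_{d−1} be pairwise distinct real numbers (d ≥ 1, indices modulo d), let P = {ρ_0, …, ρ_{d−1}}, let ℓ ≥ 1 be an integer, let h : P → ℝ be strictly increasing, and let C ∈ ℝ satisfy (min_{p∈P} h(p) − max_{p∈P} h(p))/ℓ + C > 0. For r, p ∈ P define k(r,p) = ℓ if r < p and k(r,p) = 1 otherwise, define G(ρ_t) = (h(ρ_{(t−1) mod d}) − h(ρ_t))/k(ρ_{(t−1) mod d}, ρ_t) + C for t = 0, …, d−1, and define g : P × P → ℝ by g(r, ρ_t) = G(ρ_t) if r ≥ ρ_{(t−1) mod d} and g(r, ρ_t) = 0 otherwise. Then: (i) g is reference-monotone; and (ii) for all t, t' ∈ {0, …, d−1}, g(ρ_{(t−1) mod d}, ρ_{t'}) ≤ (h(ρ_{(t−1) mod d}) − h(ρ_{t'}))/k(ρ_{(t−1) mod d}, ρ_{t'})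 + C, with equality if and only if t' = t. -/
/-- the gain function built from a strictly increasing `h` and a
large enough constant `C` is reference-monotone, and satisfies the Bellman-type
inequalities with equality exactly on the edges of the generator cycle. -/
theorem stmt10 (d : ℕ) (hd : 0 < d) (ρ : ℕ → ℝ)
    (hdistinct : ∀ s < d, ∀ t < d, ρ s = ρ t → s = t)
    (ℓ : ℕ) (hℓ : 0 < ℓ) (h : ℝ → ℝ)
    (hmono : ∀ s < d, ∀ t < d, ρ s < ρ t → h (ρ s) < h (ρ t))
    (C : ℝ)
    (hC : (((Finset.range d).image fun t => h (ρ t)).min'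
            (Finset.Nonempty.image (Finset.nonempty_range_iff.mpr hd.ne') _) -
          ((Finset.range d).image fun t => h (ρ t)).max'
            (Finset.Nonempty.image (Finset.nonempty_range_iff.mpr hd.ne') _)) / (ℓ : ℝ)
          + C > 0)
    (k : ℝ → ℝ → ℕ) (hk : ∀ r p : ℝ, k r p = if r < p then ℓ else 1)
    (g : ℝ → ℝ → ℝ)
    (hg : ∀ t < d, ∀ s < d,
      g (ρ s) (ρ t) =
        if ρ ((t + d - 1) % d) ≤ ρ s then
          (h (ρ ((t + d - 1) % d)) - h (ρ t)) / (k (ρ ((t + d - 1) % d)) (ρ t) : ℝ) + C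
        else 0) :
    RefMonotone ((Finset.range d).image ρ) g ∧
    ∀ t < d, ∀ t' < d,
      g (ρ ((t + d - 1) % d)) (ρ t') ≤
        (h (ρ ((t + d - 1) % d)) - h (ρ t')) / (k (ρ ((t + d - 1) % d)) (ρ t') : ℝ) + C ∧
      (g (ρ ((t + d - 1) % d)) (ρ t') =
        (h (ρ ((t + d - 1) % d)) - h (ρ t')) / (k (ρ ((t + d - 1) % d)) (ρ t') : ℝ) + C
        ↔ t' = t) := by
  have hℓR : (0:ℝ) < (ℓ:ℝ) := by exact_mod_cast hℓ
  set S := (Finset.range d).image fun t => h (ρ t) with hS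
  have hSne : S.Nonempty := Finset.Nonempty.image (Finset.nonempty_range_iff.mpr hd.ne') _
  have hC' : (S.min' hSne - S.max' hSne) / (ℓ:ℝ) + C > 0 := hC
  have hmin : ∀ t < d, S.min' hSne ≤ h (ρ t) := fun t ht =>
    Finset.min'_le S (h (ρ t))
      (Finset.mem_image_of_mem (fun t => h (ρ t)) (Finset.mem_range.mpr ht))
  have hmax : ∀ t < d, h (ρ t) ≤ S.max' hSne := fun t ht =>
    Finset.le_max' S (h (ρ t))
      (Finset.mem_image_of_mem (fun t => h (ρ t)) (Finset.mem_range.mpr ht))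
  have hCpos : 0 < C := by
    have h0 := hmin 0 hd
    have h1 := hmax 0 hd
    have h2 : (S.min' hSne - S.max' hSne) / (ℓ:ℝ) ≤ 0 :=
      div_nonpos_of_nonpos_of_nonneg (by linarith) hℓR.le
    linarith
  have hmle : ∀ s < d, ∀ t < d, ρ s ≤ ρ t → h (ρ s) ≤ h (ρ t) := by
    intro s hs t ht hle
    rcases hle.lt_or_eq with h' | h'
    · exact (hmono s hs t ht h').le
    · rw [h']
  have hFpos : ∀ s < d, ∀ t < d,
      0 < (h (ρ s) - h (ρ t)) / (k (ρ s) (ρ t) : ℝ) + C := by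
    intro s hs t ht
    rw [hk]
    by_cases hlt : ρ s < ρ t
    · simp only [if_pos hlt]
      have h1 := hmin s hs
      have h2 := hmax t ht
      have h3 : (S.min' hSne - S.max' hSne) / (ℓ:ℝ) ≤ (h (ρ s) - h (ρ t)) / (ℓ:ℝ) := by
        gcongr
      linarith
    · simp only [if_neg hlt, Nat.cast_one, div_one]
      have h1 : h (ρ t) ≤ h (ρ s) := hmle t ht s hs (le_of_not_gt hlt)
      linarith
  have hFmono : ∀ s < d, ∀ s' < d, ∀ t < d, ρ s < ρ s' →
      (h (ρ s) - h (ρ t)) / (k (ρ s) (ρ t) : ℝ) + C <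
      (h (ρ s') - h (ρ t)) / (k (ρ s') (ρ t) : ℝ) + C := by
    intro s hs s' hs' t ht hss
    rw [hk, hk]
    have hh := hmono s hs s' hs' hss
    by_cases h1 : ρ s < ρ t <;> by_cases h2 : ρ s' < ρ t
    · simp only [if_pos h1, if_pos h2]
      have h3 : (h (ρ s) - h (ρ t)) / (ℓ:ℝ) < (h (ρ s') - h (ρ t)) / (ℓ:ℝ) := by
        gcongr <;> linarith
      linarith
    · simp only [if_pos h1, if_neg h2, Nat.cast_one, div_one]
      have h3 : (h (ρ s) - h (ρ t)) / (ℓ:ℝ) < 0 :=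
        div_neg_of_neg_of_pos (by linarith [hmono s hs t ht h1]) hℓR
      have h4 : h (ρ t) ≤ h (ρ s') := hmle t ht s' hs' (le_of_not_gt h2)
      linarith
    · exact absurd (hss.trans h2) h1
    · simp only [if_neg h1, if_neg h2, Nat.cast_one, div_one]
      linarith
  have hprevlt : ∀ t : ℕ, (t + d - 1) % d < d := fun t => Nat.mod_lt _ hd
  have hprevinj : ∀ t < d, ∀ t' < d, (t + d - 1) % d = (t' + d - 1) % d → t = t' := by
    intro t ht t' ht' he
    have h1 : t + d - 1 = t + (d - 1) := by omega
    have h2 : t' + d - 1 = t' + (d - 1) := by omega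
    rw [h1, h2] at he
    have h3 : t % d = t' % d := Nat.ModEq.add_right_cancel' (d - 1) he
    rwa [Nat.mod_eq_of_lt ht, Nat.mod_eq_of_lt ht'] at h3
  constructor
  · intro p hp r hr r' hr' hrr
    obtain ⟨t, htm, rfl⟩ := Finset.mem_image.mp hp
    obtain ⟨s, hsm, rfl⟩ := Finset.mem_image.mp hr
    obtain ⟨s', hs'm, rfl⟩ := Finset.mem_image.mp hr'
    rw [Finset.mem_range] at htm hsm hs'm
    rw [hg t htm s hsm, hg t htm s' hs'm]
    by_cases hc : ρ ((t + d - 1) % d) ≤ ρ s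
    · rw [if_pos hc, if_pos (hc.trans hrr)]
    · rw [if_neg hc]
      split_ifs with hc'
      · exact (hFpos _ (hprevlt t) t htm).le
      · exact le_rfl
  · intro t ht t' ht'
    have hs := hprevlt t
    have hs' := hprevlt t'
    rw [hg t' ht' _ hs]
    by_cases heq : t' = t
    · subst heq
      rw [if_pos le_rfl]
      exact ⟨le_rfl, by simp⟩
    · have hne : (t' + d - 1) % d ≠ (t + d - 1) % d := fun he =>
        heq (hprevinj t' ht' t ht he)
      have hρne : ρ ((t' + d - 1) % d) ≠ ρ ((t + d - 1) % d) := fun he =>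
        hne (hdistinct _ hs' _ hs he)
      by_cases hc : ρ ((t' + d - 1) % d) ≤ ρ ((t + d - 1) % d)
      · rw [if_pos hc]
        have hlt := hFmono _ hs' _ hs t' ht' (lt_of_le_of_ne hc hρne)
        exact ⟨hlt.le, ⟨fun he => absurd he hlt.ne, fun he => absurd he heq⟩⟩
      · rw [if_neg hc]
        have hp := hFpos _ hs t' ht'
        exact ⟨hp.le, ⟨fun he => absurd he.symm hp.ne', fun he => absurd he heq⟩⟩
end
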